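/- arXiv:1112.0526 — 3 statements merged into one kernel-verified Lean document; each statement's English description precedes it below -/
import Mathlib

section
/- Let x ∈ ℝ^{m×n}, r = min{m,n}, s ∈ {0,1,…,r}, and S = {y ∈ ℝ^{m×n} : rank(y) ≤ s}. For every pair of orthogonal matrices (U,V) ∈ O(m)×O(n) with x = UΣ(x)Vᵀ, the truncated matrix y = UΣ_s(x)Vᵀ belongs to the projection P_S(x); i.e., y ∈ S and ‖x − y‖ ≤ ‖x − z‖ for all z ∈ S. -/
/-!
Conjugating by `U` and `V` preserves the Frobenius norm, so it suffices to compare `Σ - Σ_s`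
with `Σ - w` for `rank w ≤ s`. Let `P` be the orthogonal projection onto the column space of `w`.
Column by column, `‖Σ - w‖² ≥ ‖(1 - P) Σ‖² = ∑ σ_k² (1 - ‖P e_k‖²)`, and the weights
`d_k = ‖P e_k‖²` lie in `[0, 1]` with `∑ d_k ≤ tr P = rank w ≤ s`. As the `σ_k²` decrease,
`∑ σ_k² (1 - d_k)` is smallest when `d` is the indicator of the first `s` indices, where it
equals `∑_{k ≥ s} σ_k² = ‖Σ - Σ_s‖²`.
-/

open Filter Topology Matrix Set
open scoped ENNReal

attribute [local instance] Matrix.frobeniusNormedAddCommGroup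

noncomputable section

namespace RankPaper

variable {m n : ℕ}

/-- Singular values of `x` in decreasing order (`svals x ⟨0,_⟩ = σ₁(x)` is the largest),
indexed by `Fin (min m n)`; defined as the square roots of the decreasingly sorted
eigenvalues of `xᴴ * x`. -/
noncomputable def svals (x : Matrix (Fin m) (Fin n) ℝ) : Fin (min m n) → ℝ := fun j =>
  Real.sqrt
    (((Matrix.isHermitian_conjTranspose_mul_self x).eigenvalues ∘
        ⇑(Tuple.sort (Matrix.isHermitian_conjTranspose_mul_self x).eigenvalues))
      (Fin.rev (Fin.castLE (min_le_right m n) j)))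

/-- The `m × n` diagonal matrix of singular values `Σ(x)`. -/
noncomputable def SigmaMat (x : Matrix (Fin m) (Fin n) ℝ) : Matrix (Fin m) (Fin n) ℝ :=
  Matrix.of fun i j =>
    if h : (i : ℕ) = (j : ℕ) ∧ (i : ℕ) < min m n then svals x ⟨(i : ℕ), h.2⟩ else 0

/-- The truncated diagonal matrix `Σ_s(x)` keeping only the `s` largest singular values. -/
noncomputable def SigmaTrunc (s : ℕ) (x : Matrix (Fin m) (Fin n) ℝ) :
    Matrix (Fin m) (Fin n) ℝ :=
  Matrix.of fun i j =>
    if h : (i : ℕ) = (j : ℕ) ∧ (i : ℕ) < min m n ∧ (i : ℕ) < s then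
      svals x ⟨(i : ℕ), h.2.1⟩ else 0

/-- The (multivalued) projection onto a set `Ω ⊆ ℝ^{m×n}` w.r.t. the Frobenius norm. -/
def projSet (Ω : Set (Matrix (Fin m) (Fin n) ℝ)) (x : Matrix (Fin m) (Fin n) ℝ) :
    Set (Matrix (Fin m) (Fin n) ℝ) :=
  {y | y ∈ Ω ∧ ∀ z ∈ Ω, ‖x - y‖ ≤ ‖x - z‖}

/-- The proximal normal cone to `Ω` at `xb`: all vectors `t • (x - xb)` with `t ≥ 0`
and `xb` a nearest point of `Ω` to `x`. -/
def proxNormalCone (Ω : Set (Matrix (Fin m) (Fin n) ℝ)) (xb : Matrix (Fin m) (Fin n) ℝ) :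
    Set (Matrix (Fin m) (Fin n) ℝ) :=
  {v | ∃ t : ℝ, 0 ≤ t ∧ ∃ x, xb ∈ projSet Ω x ∧ v = t • (x - xb)}

/-- The limiting (Mordukhovich) normal cone to `Ω` at `xb`, described via limits of
proximal-normal directions `v^k ∈ cone (x^k - P_Ω(x^k))` along sequences `x^k → xb`. -/
def normalCone (Ω : Set (Matrix (Fin m) (Fin n) ℝ)) (xb : Matrix (Fin m) (Fin n) ℝ) :
    Set (Matrix (Fin m) (Fin n) ℝ) :=
  {v | ∃ x w : ℕ → Matrix (Fin m) (Fin n) ℝ,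
      Tendsto x atTop (𝓝 xb) ∧ Tendsto w atTop (𝓝 v) ∧
      ∀ k, ∃ t : ℝ, 0 ≤ t ∧ ∃ y ∈ projSet Ω (x k), w k = t • (x k - y)}

/-- The row space of `x`, i.e. `range (xᵀ) = ker(x)ᗮ ⊆ ℝⁿ`. -/
def rowSpace (x : Matrix (Fin m) (Fin n) ℝ) : Submodule ℝ (Fin n → ℝ) :=
  LinearMap.range (Matrix.mulVecLin xᵀ)

/-- `𝕁(x, α) = {j : σ_j(x) ≥ α}` (in particular empty for `α = ∞`). -/
def Jset (x : Matrix (Fin m) (Fin n) ℝ) (α : ℝ≥0∞) : Set (Fin (min m n)) :=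
  {j | α ≤ ENNReal.ofReal (svals x j)}

/-- `α_s(x) = sup {α : |𝕁(x,α)| ≥ s}`. -/
noncomputable def alphaS (s : ℕ) (x : Matrix (Fin m) (Fin n) ℝ) : ℝ≥0∞ :=
  sSup {α : ℝ≥0∞ | s ≤ (Jset x α).ncard}

section Frobenius

variable {ι κ : Type*} [Fintype ι] [Fintype κ]

theorem frobenius_norm_sq_eq_sum_sq (A : Matrix ι κ ℝ) : ‖A‖ ^ 2 = ∑ i, ∑ j, A i j ^ 2 := by
  rw [frobenius_norm_def, ← Real.rpow_natCast, ← Real.rpow_mul (by positivity)]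
  norm_num

theorem frobenius_norm_sq_eq_trace (A : Matrix ι κ ℝ) : ‖A‖ ^ 2 = (Aᵀ * A).trace := by
  rw [frobenius_norm_sq_eq_sum_sq, Finset.sum_comm]
  simp [trace, mul_apply, sq]

theorem frobenius_norm_sq_eq_sum_norm_sq_col (A : Matrix ι κ ℝ) :
    ‖A‖ ^ 2 = ∑ j, ‖WithLp.toLp 2 (Aᵀ j)‖ ^ 2 := by
  rw [frobenius_norm_sq_eq_sum_sq, Finset.sum_comm]
  simp [EuclideanSpace.norm_sq_eq]

theorem frobenius_norm_mul_mul_transpose [DecidableEq ι] [DecidableEq κ] {U : Matrix ι ι ℝ}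
    {V : Matrix κ κ ℝ} (hU : U ∈ orthogonalGroup ι ℝ) (hV : V ∈ orthogonalGroup κ ℝ)
    (A : Matrix ι κ ℝ) : ‖U * A * Vᵀ‖ = ‖A‖ := by
  have hUU : Uᵀ * U = 1 := (mem_orthogonalGroup_iff' ι ℝ).1 hU
  have hVV : Vᵀ * V = 1 := (mem_orthogonalGroup_iff' κ ℝ).1 hV
  rw [← sq_eq_sq₀ (norm_nonneg _) (norm_nonneg _), frobenius_norm_sq_eq_trace,
    frobenius_norm_sq_eq_trace]
  calc ((U * A * Vᵀ)ᵀ * (U * A * Vᵀ)).trace = (V * (Aᵀ * (Uᵀ * U) * A) * Vᵀ).trace := by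
        simp only [transpose_mul, transpose_transpose, Matrix.mul_assoc]
    _ = (Aᵀ * A).trace := by
        rw [trace_mul_comm, ← Matrix.mul_assoc, hVV, hUU, Matrix.one_mul, Matrix.mul_one]

theorem rank_le_card_of_row_eq_zero (A : Matrix ι κ ℝ) (S : Finset ι)
    (hA : ∀ i ∉ S, A i = 0) : A.rank ≤ S.card := by
  classical
  set D : Matrix ι ι ℝ := diagonal fun i => if i ∈ S then 1 else 0
  have hA' : A = D * A := by
    ext i j
    by_cases hi : i ∈ S <;> simp [D, hi, hA]
  calc A.rank ≤ D.rank := by rw [hA']; exact rank_mul_le_left _ _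
    _ = S.card := by rw [rank_diagonal, Fintype.card_subtype]; simp

end Frobenius

theorem finrank_span_col_eq_rank {ι κ : Type*} [Fintype κ] (w : Matrix ι κ ℝ) :
    Module.finrank ℝ (Submodule.span ℝ (Set.range fun j => WithLp.toLp 2 (wᵀ j))) = w.rank := by
  rw [rank_eq_finrank_span_cols,
    ← LinearEquiv.finrank_map_eq (WithLp.linearEquiv 2 ℝ (ι → ℝ)).symm, Submodule.map_span,
    ← Set.range_comp]
  rfl

theorem norm_starProjection_orthogonal_le {E : Type*} [NormedAddCommGroup E]
    [InnerProductSpace ℝ E] (K : Submodule ℝ E) [K.HasOrthogonalProjection] (v : E) {u : E}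
    (hu : u ∈ K) :
    ‖Kᗮ.starProjection v‖ ≤ ‖v - u‖ := by
  rw [K.starProjection_orthogonal_val, K.starProjection_minimal]
  exact ciInf_le ⟨0, Set.forall_mem_range.2 fun _ => norm_nonneg _⟩ (⟨u, hu⟩ : K)

section Projection

variable {ι : Type*} [Fintype ι] [DecidableEq ι] (K : Submodule ℝ (EuclideanSpace ℝ ι))

theorem sum_norm_sq_starProjection_single :
    ∑ i, ‖K.starProjection (EuclideanSpace.single i 1)‖ ^ 2 = Module.finrank ℝ K := by
  have hproj : LinearMap.IsProj K (K.starProjection : EuclideanSpace ℝ ι →ₗ[ℝ] _) :=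
    ⟨fun x => K.starProjection_apply_mem x, fun x hx => K.starProjection_eq_self_iff.2 hx⟩
  rw [← hproj.trace, LinearMap.trace_eq_sum_inner _ (EuclideanSpace.basisFun ι ℝ)]
  refine Finset.sum_congr rfl fun i _ => ?_
  rw [EuclideanSpace.basisFun_apply, ContinuousLinearMap.coe_coe, real_inner_comm]
  simpa using (K.re_inner_starProjection_eq_normSq (EuclideanSpace.single i (1 : ℝ))).symm

theorem norm_starProjection_single_le_one (i : ι) :
    ‖K.starProjection (EuclideanSpace.single i (1 : ℝ))‖ ≤ 1 := by
  simpa using K.norm_starProjection_apply_le (EuclideanSpace.single i (1 : ℝ))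

end Projection

theorem sum_norm_sq_starProjection_orthogonal_col_le {ι κ : Type*} [Fintype ι] [Fintype κ]
    (K : Submodule ℝ (EuclideanSpace ℝ ι)) (A w : Matrix ι κ ℝ)
    (hw : ∀ j, WithLp.toLp 2 (wᵀ j) ∈ K) :
    ∑ j, ‖Kᗮ.starProjection (WithLp.toLp 2 (Aᵀ j))‖ ^ 2 ≤ ‖A - w‖ ^ 2 := by
  rw [frobenius_norm_sq_eq_sum_norm_sq_col]
  refine Finset.sum_le_sum fun j _ => ?_
  gcongr
  have hcol : WithLp.toLp 2 ((A - w)ᵀ j) = WithLp.toLp 2 (Aᵀ j) - WithLp.toLp 2 (wᵀ j) := by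
    rw [transpose_sub]; rfl
  rw [hcol]
  exact norm_starProjection_orthogonal_le K _ (hw j)

theorem sum_compl_le_sum_mul_one_sub {ι : Type*} [Fintype ι] [DecidableEq ι] (T : Finset ι)
    {μ d : ι → ℝ} {c : ℝ} (hc : 0 ≤ c) (hμT : ∀ i ∈ T, c ≤ μ i) (hμTc : ∀ i ∉ T, μ i ≤ c)
    (hd0 : ∀ i, 0 ≤ d i) (hd1 : ∀ i, d i ≤ 1) (hd : ∑ i, d i ≤ T.card) :
    ∑ i ∈ Tᶜ, μ i ≤ ∑ i, μ i * (1 - d i) := by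
  have hT : ∑ i ∈ T, c * (1 - d i) ≤ ∑ i ∈ T, μ i * (1 - d i) :=
    Finset.sum_le_sum fun i hi => mul_le_mul_of_nonneg_right (hμT i hi) (sub_nonneg.2 (hd1 i))
  have hTc : ∑ i ∈ Tᶜ, μ i * d i ≤ ∑ i ∈ Tᶜ, c * d i :=
    Finset.sum_le_sum fun i hi =>
      mul_le_mul_of_nonneg_right (hμTc i (Finset.mem_compl.1 hi)) (hd0 i)
  have hslack : 0 ≤ c * (T.card - ∑ i, d i) := mul_nonneg hc (sub_nonneg.2 hd)
  rw [← Finset.sum_add_sum_compl T d] at hslack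
  rw [← Finset.sum_add_sum_compl T]
  simp only [mul_one_sub, Finset.sum_sub_distrib, ← Finset.mul_sum, Finset.sum_const,
    nsmul_eq_mul] at hT hTc ⊢
  nlinarith

theorem sum_filter_le_le_sum_mul_one_sub {r s : ℕ} {μ d : Fin r → ℝ} (hμ : Antitone μ)
    (hμ0 : ∀ k, 0 ≤ μ k) (hd0 : ∀ k, 0 ≤ d k) (hd1 : ∀ k, d k ≤ 1) (hd : ∑ k, d k ≤ s) :
    ∑ k : Fin r with s ≤ k.val, μ k ≤ ∑ k, μ k * (1 - d k) := by
  set T : Finset (Fin r) := {k | (k : ℕ) < s}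
  have hTc : Tᶜ = ({k | s ≤ k.val} : Finset (Fin r)) := by ext k; simp [T]
  have hcard : ∑ k, d k ≤ T.card := by
    have : ∑ k, d k ≤ r := by simpa using Finset.sum_le_sum fun k (_ : k ∈ Finset.univ) => hd1 k
    rw [Fin.card_filter_val_lt, Nat.cast_min]
    exact le_min this hd
  rw [← hTc]
  by_cases hs : s < r
  · refine sum_compl_le_sum_mul_one_sub T (hμ0 ⟨s, hs⟩) (fun k hk => hμ ?_)
      (fun k hk => hμ ?_) hd0 hd1 hcard
    · simp only [T, Finset.mem_filter, Finset.mem_univ, true_and] at hk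
      exact Fin.le_def.2 hk.le
    · simpa [T, Fin.le_def] using hk
  · refine sum_compl_le_sum_mul_one_sub T le_rfl (fun k _ => hμ0 k) (fun k hk => ?_) hd0 hd1 hcard
    exact absurd (by simp only [T, Finset.mem_filter, Finset.mem_univ, true_and]; omega) hk

def rectDiagonal (g : Fin (min m n) → ℝ) : Matrix (Fin m) (Fin n) ℝ :=
  Matrix.of fun i j => if h : (i : ℕ) = (j : ℕ) ∧ (i : ℕ) < min m n then g ⟨i, h.2⟩ else 0

theorem toLp_col_rectDiagonal (g : Fin (min m n) → ℝ) (j : Fin n) :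
    WithLp.toLp 2 ((rectDiagonal g)ᵀ j) = if h : (j : ℕ) < min m n then
      g ⟨j, h⟩ • EuclideanSpace.single (⟨j, h.trans_le (min_le_left m n)⟩ : Fin m) 1 else 0 := by
  ext i
  split_ifs with h
  · by_cases hij : (i : ℕ) = j <;> simp [rectDiagonal, hij, Fin.ext_iff]
  · exact dif_neg (by omega)

theorem sum_col_rectDiagonal (g : Fin (min m n) → ℝ) (f : EuclideanSpace ℝ (Fin m) → ℝ)
    (hf : f 0 = 0) : ∑ j, f (WithLp.toLp 2 ((rectDiagonal g)ᵀ j)) =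
      ∑ k, f (g k • EuclideanSpace.single (Fin.castLE (min_le_left m n) k) 1) := by
  refine (Fintype.sum_of_injective (Fin.castLE (min_le_right m n)) (Fin.castLE_injective _) _ _
    (fun j hj => ?_) fun k => ?_).symm
  · have hjr : ¬ (j : ℕ) < min m n := fun h => hj ⟨⟨j, h⟩, rfl⟩
    rw [toLp_col_rectDiagonal, dif_neg hjr, hf]
  · rw [toLp_col_rectDiagonal,
      dif_pos (show (Fin.castLE (min_le_right m n) k : ℕ) < min m n from k.2)]
    rfl

theorem frobenius_norm_sq_rectDiagonal (g : Fin (min m n) → ℝ) :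
    ‖rectDiagonal g‖ ^ 2 = ∑ k, g k ^ 2 := by
  rw [frobenius_norm_sq_eq_sum_norm_sq_col, sum_col_rectDiagonal g (‖·‖ ^ 2) (by simp)]
  simp [norm_smul]

theorem sum_norm_sq_starProjection_orthogonal_col_rectDiagonal (g : Fin (min m n) → ℝ)
    (K : Submodule ℝ (EuclideanSpace ℝ (Fin m))) :
    ∑ j, ‖Kᗮ.starProjection (WithLp.toLp 2 ((rectDiagonal g)ᵀ j))‖ ^ 2 =
      ∑ k, g k ^ 2 * (1 -
        ‖K.starProjection (EuclideanSpace.single (Fin.castLE (min_le_left m n) k) 1)‖ ^ 2) := by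
  rw [sum_col_rectDiagonal g (fun v => ‖Kᗮ.starProjection v‖ ^ 2) (by simp)]
  refine Finset.sum_congr rfl fun k _ => ?_
  have hpyth := K.norm_sq_eq_add_norm_sq_starProjection
    (EuclideanSpace.single (Fin.castLE (min_le_left m n) k) (1 : ℝ))
  rw [PiLp.norm_single, norm_one, one_pow] at hpyth
  rw [map_smul, norm_smul, mul_pow, Real.norm_eq_abs, sq_abs]
  congr 1
  linarith

theorem rank_rectDiagonal_le {g : Fin (min m n) → ℝ} {s : ℕ}
    (hg : ∀ k : Fin (min m n), s ≤ (k : ℕ) → g k = 0) :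
    (rectDiagonal g).rank ≤ s := by
  refine (rank_le_card_of_row_eq_zero _ {i : Fin m | (i : ℕ) < s} fun i hi => ?_).trans ?_
  · ext j
    simp only [Finset.mem_filter, Finset.mem_univ, true_and, not_lt] at hi
    simp only [rectDiagonal, of_apply, Pi.zero_apply]
    split_ifs with h
    · exact hg _ hi
    · rfl
  · rw [Fin.card_filter_val_lt]
    exact min_le_right _ _

theorem svals_nonneg (x : Matrix (Fin m) (Fin n) ℝ) (k : Fin (min m n)) : 0 ≤ svals x k :=
  Real.sqrt_nonneg _

theorem svals_antitone (x : Matrix (Fin m) (Fin n) ℝ) : Antitone (svals x) := fun _ _ hjk =>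
  Real.sqrt_le_sqrt (Tuple.monotone_sort _ (Fin.rev_le_rev.2 hjk))

theorem SigmaMat_eq_rectDiagonal (x : Matrix (Fin m) (Fin n) ℝ) :
    SigmaMat x = rectDiagonal (svals x) :=
  rfl

theorem SigmaTrunc_eq_rectDiagonal (s : ℕ) (x : Matrix (Fin m) (Fin n) ℝ) :
    SigmaTrunc s x = rectDiagonal fun k => if (k : ℕ) < s then svals x k else 0 := by
  ext i j
  simp only [SigmaTrunc, rectDiagonal, of_apply]
  split_ifs <;> first | rfl | omega

theorem SigmaMat_sub_SigmaTrunc (s : ℕ) (x : Matrix (Fin m) (Fin n) ℝ) :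
    SigmaMat x - SigmaTrunc s x = rectDiagonal fun k => if s ≤ (k : ℕ) then svals x k else 0 := by
  ext i j
  simp only [SigmaMat_eq_rectDiagonal, SigmaTrunc_eq_rectDiagonal, rectDiagonal, Matrix.sub_apply,
    of_apply]
  split_ifs <;> first | omega | ring

theorem norm_SigmaMat_sub_SigmaTrunc_le (s : ℕ) (x : Matrix (Fin m) (Fin n) ℝ)
    {w : Matrix (Fin m) (Fin n) ℝ} (hw : w.rank ≤ s) :
    ‖SigmaMat x - SigmaTrunc s x‖ ≤ ‖SigmaMat x - w‖ := by
  set K := Submodule.span ℝ (Set.range fun j => WithLp.toLp 2 (wᵀ j))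
  set d : Fin (min m n) → ℝ := fun k =>
    ‖K.starProjection (EuclideanSpace.single (Fin.castLE (min_le_left m n) k) 1)‖ ^ 2
  have hd : ∑ k, d k ≤ s := calc
    ∑ k, d k = ∑ i ∈ Finset.univ.map (Fin.castLEEmb (min_le_left m n)),
        ‖K.starProjection (EuclideanSpace.single i 1)‖ ^ 2 := by
          rw [Finset.sum_map]; rfl
    _ ≤ ∑ i, ‖K.starProjection (EuclideanSpace.single i 1)‖ ^ 2 :=
        Finset.sum_le_sum_of_subset_of_nonneg (Finset.subset_univ _) fun _ _ _ => by positivity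
    _ = w.rank := by rw [sum_norm_sq_starProjection_single, finrank_span_col_eq_rank]
    _ ≤ s := by exact_mod_cast hw
  rw [← sq_le_sq₀ (norm_nonneg _) (norm_nonneg _)]
  calc ‖SigmaMat x - SigmaTrunc s x‖ ^ 2 = ∑ k : Fin (min m n) with s ≤ k.val, svals x k ^ 2 := by
        rw [SigmaMat_sub_SigmaTrunc, frobenius_norm_sq_rectDiagonal, Finset.sum_filter]
        simp only [ite_pow, ne_eq, OfNat.ofNat_ne_zero, not_false_eq_true, zero_pow]
    _ ≤ ∑ k, svals x k ^ 2 * (1 - d k) :=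
        sum_filter_le_le_sum_mul_one_sub
          (fun _ _ hjk => pow_le_pow_left₀ (svals_nonneg x _) (svals_antitone x hjk) 2)
          (fun _ => sq_nonneg _) (fun _ => sq_nonneg _)
          (fun _ => pow_le_one₀ (norm_nonneg _) (norm_starProjection_single_le_one K _)) hd
    _ = ∑ j, ‖Kᗮ.starProjection (WithLp.toLp 2 ((SigmaMat x)ᵀ j))‖ ^ 2 :=
        (sum_norm_sq_starProjection_orthogonal_col_rectDiagonal _ K).symm
    _ ≤ ‖SigmaMat x - w‖ ^ 2 :=
        sum_norm_sq_starProjection_orthogonal_col_le K _ _ fun j => Submodule.subset_span ⟨j, rfl⟩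

theorem svd_truncation_mem_projSet_general (m n s : ℕ)
    (x : Matrix (Fin m) (Fin n) ℝ)
    (U : Matrix (Fin m) (Fin m) ℝ) (V : Matrix (Fin n) (Fin n) ℝ)
    (hU : U ∈ Matrix.orthogonalGroup (Fin m) ℝ)
    (hV : V ∈ Matrix.orthogonalGroup (Fin n) ℝ)
    (hx : x = U * SigmaMat x * Vᵀ) :
    U * SigmaTrunc s x * Vᵀ ∈
      projSet {y : Matrix (Fin m) (Fin n) ℝ | y.rank ≤ s} x := by
  have hUU : U * Uᵀ = 1 := (mem_orthogonalGroup_iff (Fin m) ℝ).1 hU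
  have hVV : V * Vᵀ = 1 := (mem_orthogonalGroup_iff (Fin n) ℝ).1 hV
  refine ⟨?_, fun z hz => ?_⟩
  · calc (U * SigmaTrunc s x * Vᵀ).rank ≤ (SigmaTrunc s x).rank :=
          (rank_mul_le_left _ _).trans (rank_mul_le_right _ _)
      _ ≤ s := by
          rw [SigmaTrunc_eq_rectDiagonal]
          exact rank_rectDiagonal_le fun k hk => if_neg (not_lt.2 hk)
  · set w := Uᵀ * z * V
    have hz_eq : z = U * w * Vᵀ := by
      simp only [w, Matrix.mul_assoc, hVV, Matrix.mul_one, ← Matrix.mul_assoc U, hUU,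
        Matrix.one_mul]
    have hw : w.rank ≤ s := ((rank_mul_le_left _ _).trans (rank_mul_le_right _ _)).trans hz
    calc ‖x - U * SigmaTrunc s x * Vᵀ‖ = ‖SigmaMat x - SigmaTrunc s x‖ := by
          rw [← frobenius_norm_mul_mul_transpose hU hV (SigmaMat x - _), Matrix.mul_sub,
            Matrix.sub_mul, ← hx]
      _ ≤ ‖SigmaMat x - w‖ := norm_SigmaMat_sub_SigmaTrunc_le s x hw
      _ = ‖x - z‖ := by
          rw [← frobenius_norm_mul_mul_transpose hU hV (SigmaMat x - _), Matrix.mul_sub,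
            Matrix.sub_mul, ← hx, ← hz_eq]

/-- any SVD-truncation of `x` is a nearest point of
`S = {y : rank y ≤ s}` to `x`. -/
theorem svd_truncation_mem_projSet (m n s : ℕ) (hs : s ≤ min m n)
    (x : Matrix (Fin m) (Fin n) ℝ)
    (U : Matrix (Fin m) (Fin m) ℝ) (V : Matrix (Fin n) (Fin n) ℝ)
    (hU : U ∈ Matrix.orthogonalGroup (Fin m) ℝ)
    (hV : V ∈ Matrix.orthogonalGroup (Fin n) ℝ)
    (hx : x = U * SigmaMat x * Vᵀ) :
    U * SigmaTrunc s x * Vᵀ ∈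
      projSet {y : Matrix (Fin m) (Fin n) ℝ | y.rank ≤ s} x :=
  svd_truncation_mem_projSet_general m n s x U V hU hV hx

end RankPaper
end
end

section
/- Let r = min{m,n}, s ∈ {0,1,…,r}, S = {y ∈ ℝ^{m×n} : rank(y) ≤ s}, and let x̄ ∈ S with rank(x̄) < s. Then the proximal normal cone to S at x̄ is trivial: N^P_S(x̄) = {0}. -/
/-!
Since `rank x̄ < s`, the set `S` contains `x̄ + c Eᵢⱼ` for every matrix unit `Eᵢⱼ` and every `c`.
If `x̄` were a nearest point of `S` to some `x ≠ x̄`, pick an entry `(i, j)` where `x - x̄` is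
nonzero: moving `x̄` by `(x - x̄)ᵢⱼ Eᵢⱼ` strictly decreases the Frobenius distance to `x`.
So `x̄` is a nearest point of `S` only to itself, and its only proximal normal is `0`.
-/

open Filter Topology Matrix Set
open scoped ENNReal

attribute [local instance] Matrix.frobeniusNormedAddCommGroup

noncomputable section

namespace Matrix

theorem rank_add_le {m n K : Type*} [Fintype n] [Field K] (A B : Matrix m n K) :
    (A + B).rank ≤ A.rank + B.rank := by
  rw [rank, rank, rank, mulVecLin_add]
  refine (Submodule.finrank_mono ?_).trans (Submodule.finrank_add_le_finrank_add_finrank _ _)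
  rintro _ ⟨v, rfl⟩
  exact Submodule.add_mem_sup ⟨v, rfl⟩ ⟨v, rfl⟩

theorem rank_single_le_one {m n R : Type*} [Fintype n] [DecidableEq m] [DecidableEq n]
    [CommSemiring R] [StrongRankCondition R] (i : m) (j : n) (c : R) :
    (single i j c).rank ≤ 1 := by
  refine (rank_le_card_of_support_subset _ {i} fun k hk => ?_).trans_eq (Finset.card_singleton i)
  by_contra hki
  rw [Finset.coe_singleton, Set.mem_singleton_iff] at hki
  exact hk (funext fun l => by simp [row, single, Ne.symm hki])

theorem frobenius_norm_lt_of_le_of_lt {m n α : Type*} [Fintype m] [Fintype n]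
    [NormedAddCommGroup α] {A B : Matrix m n α} (hle : ∀ i j, ‖A i j‖ ≤ ‖B i j‖)
    {i : m} {j : n} (hlt : ‖A i j‖ < ‖B i j‖) : ‖A‖ < ‖B‖ := by
  rw [frobenius_norm_def, frobenius_norm_def]
  have hsq {a b : ℝ} (ha : 0 ≤ a) (hab : a ≤ b) : a ^ (2 : ℝ) ≤ b ^ (2 : ℝ) :=
    Real.rpow_le_rpow ha hab (by norm_num)
  refine Real.rpow_lt_rpow (by positivity) ?_ (by norm_num)
  refine Finset.sum_lt_sum (fun k _ => Finset.sum_le_sum fun l _ => hsq (norm_nonneg _) (hle k l))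
    ⟨i, Finset.mem_univ i, Finset.sum_lt_sum
      (fun l _ => hsq (norm_nonneg _) (hle i l)) ⟨j, Finset.mem_univ j, ?_⟩⟩
  exact Real.rpow_lt_rpow (norm_nonneg _) hlt (by norm_num)

theorem frobenius_norm_sub_single_lt {m n α : Type*} [Fintype m] [Fintype n] [DecidableEq m]
    [DecidableEq n] [NormedAddCommGroup α] {A : Matrix m n α} {i : m} {j : n}
    (hij : A i j ≠ 0) : ‖A - single i j (A i j)‖ < ‖A‖ := by
  refine frobenius_norm_lt_of_le_of_lt (i := i) (j := j) (fun k l => ?_) (by simpa using hij)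
  by_cases h : i = k ∧ j = l
  · obtain ⟨rfl, rfl⟩ := h
    simp
  · simp [single, h]

end Matrix

namespace RankPaper

variable {m n : ℕ}

theorem eq_of_mem_projSet_of_forall_add_single_mem {Ω : Set (Matrix (Fin m) (Fin n) ℝ)}
    {x xb : Matrix (Fin m) (Fin n) ℝ} (hproj : xb ∈ projSet Ω x)
    (hΩ : ∀ i j c, xb + Matrix.single i j c ∈ Ω) : x = xb := by
  by_contra hne
  obtain ⟨i, j, hij⟩ : ∃ i j, (x - xb) i j ≠ 0 := by
    by_contra! h
    exact hne (sub_eq_zero.1 (Matrix.ext h))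
  have hlt := Matrix.frobenius_norm_sub_single_lt hij
  rw [← sub_add_eq_sub_sub] at hlt
  exact (hproj.2 _ (hΩ i j _)).not_gt hlt

theorem proxNormalCone_eq_singleton_zero {Ω : Set (Matrix (Fin m) (Fin n) ℝ)}
    {xb : Matrix (Fin m) (Fin n) ℝ} (hxb : xb ∈ Ω) (hΩ : ∀ i j c, xb + Matrix.single i j c ∈ Ω) :
    proxNormalCone Ω xb = {0} := by
  ext v
  constructor
  · rintro ⟨t, -, x, hproj, rfl⟩
    rw [eq_of_mem_projSet_of_forall_add_single_mem hproj hΩ, sub_self, smul_zero]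
    exact Set.mem_singleton 0
  · rintro rfl
    exact ⟨0, le_rfl, xb, ⟨hxb, fun z _ => by simp⟩, by simp⟩

theorem proxNormalCone_trivial_general (m n s : ℕ)
    (xb : Matrix (Fin m) (Fin n) ℝ) (hxb : xb.rank < s) :
    proxNormalCone {y : Matrix (Fin m) (Fin n) ℝ | y.rank ≤ s} xb = {0} :=
  proxNormalCone_eq_singleton_zero hxb.le fun i j c =>
    calc (xb + Matrix.single i j c).rank ≤ xb.rank + (Matrix.single i j c).rank :=
          Matrix.rank_add_le _ _
      _ ≤ xb.rank + 1 := Nat.add_le_add_left (Matrix.rank_single_le_one i j c) _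
      _ ≤ s := hxb

/-- at a point `xb` of `S = {y : rank y ≤ s}` with `rank xb < s`, the
proximal normal cone is trivial. -/
theorem proxNormalCone_trivial (m n s : ℕ) (hs : s ≤ min m n)
    (xb : Matrix (Fin m) (Fin n) ℝ) (hxb : xb.rank < s) :
    proxNormalCone {y : Matrix (Fin m) (Fin n) ℝ | y.rank ≤ s} xb = {0} :=
  proxNormalCone_trivial_general m n s xb hxb

end RankPaper
end
end

section
/- Let r = min{m,n}, s ∈ {0,1,…,r}, S = {y ∈ ℝ^{m×n} : rank(y) ≤ s}, and let Ω ⊂ ℝ^{m×n} be closed. Suppose x̄ ∈ Ω ∩ S is such that every nonzero v ∈ N_Ω(x̄) satisfies ker(v)^⊥ ∩ ker(x̄)^⊥ ≠ {0}. Then N_S(x̄) ∩ (−N_Ω(x̄)) = {0}, i.e., the intersection S ∩ Ω is strongly regular at x̄ (the only solution of y₁ + y₂ = 0 with y₁ ∈ N_S(x̄) and y₂ ∈ N_Ω(x̄) is y₁ = y₂ = 0). -/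
open Filter Topology Matrix Set
open scoped ENNReal

attribute [local instance] Matrix.frobeniusNormedAddCommGroup

noncomputable section

namespace RankPaper

variable {m n : ℕ}

lemma normsq (A : Matrix (Fin m) (Fin n) ℝ) : ‖A‖^2 = ∑ i, ∑ j, (A i j)^2 := by
  have h := Matrix.frobenius_norm_def A
  have hnn : (0:ℝ) ≤ ∑ i, ∑ j, ‖A i j‖ ^ (2:ℝ) := by positivity
  have h2 : ‖A‖^2 = ((∑ i, ∑ j, ‖A i j‖ ^ (2:ℝ)) ^ (1/2 : ℝ))^2 := by rw [h]
  rw [h2, ← Real.rpow_natCast (_ ^ (1/2:ℝ)) 2, ← Real.rpow_mul hnn]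
  norm_num

lemma entry_le (A : Matrix (Fin m) (Fin n) ℝ) (i : Fin m) (j : Fin n) :
    |A i j| ≤ ‖A‖ := by
  have h1 : (A i j)^2 ≤ ‖A‖^2 := by
    rw [normsq]
    calc (A i j)^2 ≤ ∑ j', (A i j')^2 :=
          Finset.single_le_sum (f := fun j' => (A i j')^2)
            (fun _ _ => sq_nonneg _) (Finset.mem_univ j)
      _ ≤ ∑ i', ∑ j', (A i' j')^2 :=
          Finset.single_le_sum (f := fun i' => ∑ j', (A i' j')^2)
            (fun _ _ => Finset.sum_nonneg fun _ _ => sq_nonneg _) (Finset.mem_univ i)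
  nlinarith [abs_nonneg (A i j), norm_nonneg A, sq_abs (A i j)]

lemma expand_sq (A B : Matrix (Fin m) (Fin n) ℝ) (t : ℝ) :
    ‖A - t • B‖^2 = ‖A‖^2 - 2*t*(∑ i, ∑ j, A i j * B i j) + t^2 * ‖B‖^2 := by
  rw [normsq, normsq, normsq]
  have h : ∀ (i : Fin m) (j : Fin n), ((A - t • B) i j)^2
      = (A i j)^2 - 2*t*(A i j * B i j) + t^2 * (B i j)^2 := by
    intro i j
    simp [Matrix.sub_apply, Matrix.smul_apply, smul_eq_mul]
    ring
  simp_rw [h, Finset.sum_add_distrib, Finset.sum_sub_distrib, ← Finset.mul_sum]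

lemma ip_mul (M y : Matrix (Fin m) (Fin n) ℝ) (C : Matrix (Fin m) (Fin m) ℝ) :
    ∑ i, ∑ j, M i j * (C * y) i j = ∑ i, ∑ k, C i k * (M * yᵀ) i k := by
  simp_rw [Matrix.mul_apply, Matrix.transpose_apply, Finset.mul_sum]
  congr 1; ext i
  rw [Finset.sum_comm]
  congr 1; ext k
  congr 1; ext j
  ring

lemma quad_zero {a b : ℝ} (hb : 0 ≤ b) (h : ∀ t : ℝ, 0 ≤ -(2*t*a) + t^2*b) : a = 0 := by
  by_contra hne
  have hb1 : (0:ℝ) < b + 1 := by linarith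
  have h4 := h (a/(b+1))
  have key2 : -(2*(a/(b+1))*a) + (a/(b+1))^2*b = -(a^2*(b+2))/(b+1)^2 := by
    field_simp
    ring
  rw [key2] at h4
  have hpos : (0:ℝ) < a^2*(b+2) := by positivity
  have : -(a^2*(b+2))/(b+1)^2 < 0 := div_neg_of_neg_of_pos (by linarith) (by positivity)
  linarith

lemma proj_rank_orth (s : ℕ) (x y : Matrix (Fin m) (Fin n) ℝ)
    (hy : y ∈ projSet {z : Matrix (Fin m) (Fin n) ℝ | z.rank ≤ s} x) :
    (x - y) * yᵀ = 0 := by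
  obtain ⟨hyS, hmin⟩ := hy
  set M := x - y with hM
  have key : ∀ C : Matrix (Fin m) (Fin m) ℝ, ∑ i, ∑ j, M i j * (C*y) i j = 0 := by
    intro C
    apply quad_zero (sq_nonneg ‖C * y‖)
    intro t
    have hmem : (y + t • (C * y)) ∈ {z : Matrix (Fin m) (Fin n) ℝ | z.rank ≤ s} := by
      have heq : y + t • (C * y) = (1 + t • C) * y := by
        rw [Matrix.add_mul, Matrix.one_mul, Matrix.smul_mul]
      rw [Set.mem_setOf_eq, heq]
      exact le_trans (Matrix.rank_mul_le_right _ _) hyS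
    have h1 := hmin _ hmem
    have h2 : x - (y + t • (C * y)) = M - t • (C * y) := by rw [hM]; abel
    rw [h2] at h1
    have h3 : ‖M‖^2 ≤ ‖M - t • (C * y)‖^2 := pow_le_pow_left₀ (norm_nonneg _) h1 2
    rw [expand_sq] at h3
    linarith
  have h0 := key (M * yᵀ)
  rw [ip_mul] at h0
  ext i k
  have hsq : ∀ i, ∀ k, (0:ℝ) ≤ (M*yᵀ) i k * (M*yᵀ) i k := fun i k => mul_self_nonneg _
  have h1 : ∀ i ∈ Finset.univ, (0:ℝ) ≤ ∑ k, (M*yᵀ) i k * (M*yᵀ) i k :=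
    fun i _ => Finset.sum_nonneg fun k _ => hsq i k
  have h2 := (Finset.sum_eq_zero_iff_of_nonneg h1).mp h0 i (Finset.mem_univ i)
  have h3 := (Finset.sum_eq_zero_iff_of_nonneg (fun k _ => hsq i k)).mp h2 k (Finset.mem_univ k)
  have := mul_self_eq_zero.mp h3
  simpa using this

lemma entry_tendsto {w : ℕ → Matrix (Fin m) (Fin n) ℝ} {v : Matrix (Fin m) (Fin n) ℝ}
    (h : Filter.Tendsto w Filter.atTop (𝓝 v)) (i : Fin m) (j : Fin n) :
    Filter.Tendsto (fun k => w k i j) Filter.atTop (𝓝 (v i j)) := by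
  replace h := tendsto_iff_norm_sub_tendsto_zero.mp h
  rw [← tendsto_sub_nhds_zero_iff]
  apply squeeze_zero_norm _ h
  intro k
  have := entry_le (w k - v) i j
  simpa [Matrix.sub_apply] using this

lemma normal_rank_orth (s : ℕ) (xb : Matrix (Fin m) (Fin n) ℝ) (hxb : xb.rank ≤ s)
    (v : Matrix (Fin m) (Fin n) ℝ)
    (hv : v ∈ normalCone {z : Matrix (Fin m) (Fin n) ℝ | z.rank ≤ s} xb) :
    v * xbᵀ = 0 := by
  obtain ⟨x, w, hx, hw, hk⟩ := hv
  choose t ht y hy hwk using hk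
  have hzero : ∀ k, w k * (y k)ᵀ = 0 := by
    intro k
    rw [hwk k, Matrix.smul_mul, proj_rank_orth s (x k) (y k) (hy k), smul_zero]
  have hxnorm : Filter.Tendsto (fun k => ‖x k - xb‖) Filter.atTop (𝓝 0) := by
    exact tendsto_iff_norm_sub_tendsto_zero.mp hx
  have hytend : Filter.Tendsto y Filter.atTop (𝓝 xb) := by
    refine tendsto_iff_norm_sub_tendsto_zero.mpr ?_
    refine squeeze_zero_norm (a := fun k => 2 * ‖x k - xb‖) ?_ ?_
    · intro k
      have h1 : ‖x k - y k‖ ≤ ‖x k - xb‖ := (hy k).2 xb hxb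
      have h2 : y k - xb = (x k - xb) - (x k - y k) := by abel
      rw [Real.norm_eq_abs, abs_norm]
      calc ‖y k - xb‖ = ‖(x k - xb) - (x k - y k)‖ := by rw [h2]
        _ ≤ ‖x k - xb‖ + ‖x k - y k‖ := norm_sub_le _ _
        _ ≤ 2 * ‖x k - xb‖ := by linarith
    · have := hxnorm.const_mul (2:ℝ)
      simpa using this
  ext i j
  have hlim : Filter.Tendsto (fun k => (w k * (y k)ᵀ) i j) Filter.atTop
      (𝓝 ((v * xbᵀ) i j)) := by
    simp only [Matrix.mul_apply, Matrix.transpose_apply]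
    exact tendsto_finset_sum _ fun l _ =>
      (entry_tendsto hw i l).mul (entry_tendsto hytend j l)
  have hconst : (fun k => (w k * (y k)ᵀ) i j) = fun _ => (0:ℝ) := by
    funext k; rw [hzero k]; rfl
  rw [hconst] at hlim
  have := tendsto_nhds_unique hlim tendsto_const_nhds
  simpa using this


/-- strong regularity of the intersection of a closed set `Ω` with
`S = {y : rank y ≤ s}` at `xb ∈ Ω ∩ S`, under the row-space condition on nonzero
normals to `Ω` at `xb`. -/
theorem strong_regularity_of_rowSpace_condition (m n s : ℕ) (hs : s ≤ min m n)
    (Ω : Set (Matrix (Fin m) (Fin n) ℝ)) (hΩ : IsClosed Ω)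
    (xb : Matrix (Fin m) (Fin n) ℝ) (hxbΩ : xb ∈ Ω) (hxbS : xb.rank ≤ s)
    (hcq : ∀ v ∈ normalCone Ω xb, v ≠ 0 → rowSpace v ⊓ rowSpace xb ≠ ⊥) :
    ∀ y₁ y₂ : Matrix (Fin m) (Fin n) ℝ,
      y₁ ∈ normalCone {y : Matrix (Fin m) (Fin n) ℝ | y.rank ≤ s} xb →
      y₂ ∈ normalCone Ω xb → y₁ + y₂ = 0 → y₁ = 0 ∧ y₂ = 0 := by
  intro y₁ y₂ h₁ h₂ hsum
  have horth : y₁ * xbᵀ = 0 := normal_rank_orth s xb hxbS y₁ h₁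
  by_cases hy1 : y₁ = 0
  · exact ⟨hy1, by rwa [hy1, zero_add] at hsum⟩
  · exfalso
    have hy2 : y₂ = -y₁ := eq_neg_of_add_eq_zero_right hsum
    have hy2ne : y₂ ≠ 0 := by rw [hy2]; exact neg_ne_zero.mpr hy1
    apply hcq y₂ h₂ hy2ne
    apply (Submodule.eq_bot_iff _).mpr
    intro u hu
    obtain ⟨hu1, hu2⟩ := Submodule.mem_inf.mp hu
    obtain ⟨a, ha⟩ := hu1
    obtain ⟨c, hc⟩ := hu2
    have hmul : y₂ * xbᵀ = 0 := by rw [hy2, Matrix.neg_mul, horth, neg_zero]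
    have hdot : u ⬝ᵥ u = 0 := by
      have heq : u ⬝ᵥ u = (y₂ᵀ.mulVecLin a) ⬝ᵥ (xbᵀ.mulVecLin c) := by rw [ha, hc]
      rw [heq, Matrix.mulVecLin_apply, Matrix.mulVecLin_apply, Matrix.mulVec_transpose,
        Matrix.dotProduct_mulVec, Matrix.vecMul_vecMul, hmul, Matrix.vecMul_zero,
        zero_dotProduct]
    exact dotProduct_self_eq_zero.mp hdot

end RankPaper
end
end
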